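/- arXiv:2301.04736 — 3 statements merged into one kernel-verified Lean document; each statement's English description precedes it below -/
import Mathlib

section
/- For measurable sets A₁,…,A_n in a probability space (X, μ) with ∑_{j=1}^n μ(A_j) > 0, one has μ(A₁ ∪ ⋯ ∪ A_n) ≥ (∑_{j=1}^n μ(A_j))² / (∑_{j,k=1}^n μ(A_j ∩ A_k)). (Chung–Erdős inequality.) -/
/-! With `N = ∑ j, 𝟙_{A j}` counting the sets that contain a point, `∫ N = ∑ μ (A j)` and
`∫ N² = ∑ j, ∑ k, μ (A j ∩ A k)`. Since `N` vanishes off `U = ⋃ j, A j`, Cauchy–Schwarz applied to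
`N = N · 𝟙_U` gives `(∫ N)² ≤ ∫ N² · μ U`. Working with `ℝ≥0∞`-valued integrals avoids any
integrability side conditions. -/

open MeasureTheory
open scoped ENNReal

namespace ENNReal

variable {α : Type*} [MeasurableSpace α] {μ : Measure α}

theorem sq_lintegral_mul_le {f g : α → ℝ≥0∞} (hf : AEMeasurable f μ) (hg : AEMeasurable g μ) :
    (∫⁻ a, f a * g a ∂μ) ^ 2 ≤ (∫⁻ a, f a ^ 2 ∂μ) * ∫⁻ a, g a ^ 2 ∂μ := by
  have holder := lintegral_mul_le_Lp_mul_Lq μ Real.HolderConjugate.two_two hf hg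
  have sq_rpow_half (x : ℝ≥0∞) : (x ^ (1 / 2 : ℝ)) ^ 2 = x := by
    rw [← rpow_natCast, ← rpow_mul]; norm_num
  simp only [rpow_two, Pi.mul_apply] at holder
  calc (∫⁻ a, f a * g a ∂μ) ^ 2
      ≤ ((∫⁻ a, f a ^ 2 ∂μ) ^ (1 / 2 : ℝ) * (∫⁻ a, g a ^ 2 ∂μ) ^ (1 / 2 : ℝ)) ^ 2 := by
        gcongr
    _ = (∫⁻ a, f a ^ 2 ∂μ) * ∫⁻ a, g a ^ 2 ∂μ := by rw [mul_pow, sq_rpow_half, sq_rpow_half]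

theorem sq_lintegral_le_lintegral_sq_mul_measure {f : α → ℝ≥0∞} (hf : AEMeasurable f μ)
    {s : Set α} (hs : MeasurableSet s) (hfs : ∀ a ∉ s, f a = 0) :
    (∫⁻ a, f a ∂μ) ^ 2 ≤ (∫⁻ a, f a ^ 2 ∂μ) * μ s := by
  have hf_eq : ∀ a, f a = f a * s.indicator 1 a := fun a => by
    by_cases ha : a ∈ s <;> simp [ha, hfs]
  have hind : ∫⁻ a, s.indicator 1 a ^ 2 ∂μ = μ s := by
    have hidem : ∀ a, s.indicator (1 : α → ℝ≥0∞) a ^ 2 = s.indicator 1 a := fun a => by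
      by_cases ha : a ∈ s <;> simp [ha]
    simp_rw [hidem, lintegral_indicator_one hs]
  calc (∫⁻ a, f a ∂μ) ^ 2 = (∫⁻ a, f a * s.indicator 1 a ∂μ) ^ 2 := by simp_rw [← hf_eq]
    _ ≤ (∫⁻ a, f a ^ 2 ∂μ) * μ s := by
        rw [← hind]; exact sq_lintegral_mul_le hf (aemeasurable_one.indicator hs)

end ENNReal

theorem Set.sq_sum_indicator_one {ι α M : Type*} [CommSemiring M] (s : Finset ι)
    (A : ι → Set α) (a : α) :
    (∑ j ∈ s, (A j).indicator (1 : α → M) a) ^ 2 =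
      ∑ j ∈ s, ∑ k ∈ s, (A j ∩ A k).indicator 1 a := by
  simp_rw [sq, Finset.sum_mul_sum, Set.inter_indicator_one, Pi.mul_apply]

section ChungErdos

variable {Ω ι : Type*} [MeasurableSpace Ω] (μ : Measure Ω) [Fintype ι] {A : ι → Set Ω}

theorem lintegral_sum_indicator_one (hA : ∀ j, MeasurableSet (A j)) :
    ∫⁻ ω, ∑ j, (A j).indicator 1 ω ∂μ = ∑ j, μ (A j) := by
  rw [lintegral_finsetSum _ fun j _ => measurable_one.indicator (hA j)]
  simp_rw [lintegral_indicator_one (hA _)]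

theorem lintegral_sq_sum_indicator_one (hA : ∀ j, MeasurableSet (A j)) :
    ∫⁻ ω, (∑ j, (A j).indicator 1 ω) ^ 2 ∂μ = ∑ j, ∑ k, μ (A j ∩ A k) := by
  simp_rw [Set.sq_sum_indicator_one]
  rw [lintegral_finsetSum _ fun j _ => Finset.measurable_sum _ fun k _ =>
    measurable_one.indicator ((hA j).inter (hA k))]
  simp_rw [lintegral_finsetSum _ fun k _ => measurable_one.indicator ((hA _).inter (hA k)),
    lintegral_indicator_one ((hA _).inter (hA _))]

theorem sq_sum_measure_le_sum_measure_inter_mul_measure_iUnion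
    (hA : ∀ j, MeasurableSet (A j)) :
    (∑ j, μ (A j)) ^ 2 ≤ (∑ j, ∑ k, μ (A j ∩ A k)) * μ (⋃ j, A j) := by
  have hvanish : ∀ ω ∉ ⋃ j, A j, ∑ j, (A j).indicator (1 : Ω → ℝ≥0∞) ω = 0 := fun ω hω =>
    Finset.sum_eq_zero fun j _ =>
      Set.indicator_of_notMem (fun h => hω (Set.mem_iUnion_of_mem j h)) _
  rw [← lintegral_sum_indicator_one μ hA, ← lintegral_sq_sum_indicator_one μ hA]
  exact ENNReal.sq_lintegral_le_lintegral_sq_mul_measure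
    (Finset.measurable_sum _ fun j _ => measurable_one.indicator (hA j)).aemeasurable
    (MeasurableSet.iUnion hA) hvanish

end ChungErdos

theorem stmt2_general {Ω : Type*} [MeasurableSpace Ω] (μ : Measure Ω) [IsProbabilityMeasure μ]
    (n : ℕ) (A : Fin n → Set Ω) (hA : ∀ j, MeasurableSet (A j)) :
    (∑ j, (μ (A j)).toReal) ^ 2 / (∑ j, ∑ k, (μ (A j ∩ A k)).toReal)
      ≤ (μ (⋃ j, A j)).toReal := by
  have key := ENNReal.toReal_mono
    (ENNReal.mul_ne_top (by simp [ENNReal.sum_eq_top]) (measure_ne_top μ _))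
    (sq_sum_measure_le_sum_measure_inter_mul_measure_iUnion μ hA)
  simp only [ENNReal.toReal_pow, ENNReal.toReal_mul, ENNReal.toReal_sum, ENNReal.sum_eq_top,
    measure_ne_top, ne_eq, not_false_eq_true, implies_true, and_false, exists_false] at key
  exact div_le_of_le_mul₀ (by positivity) ENNReal.toReal_nonneg (key.trans_eq (mul_comm _ _))

/-- the Chung–Erdős inequality. -/
theorem stmt2 {Ω : Type*} [MeasurableSpace Ω] (μ : Measure Ω) [IsProbabilityMeasure μ]
    (n : ℕ) (A : Fin n → Set Ω) (hA : ∀ j, MeasurableSet (A j))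
    (hpos : 0 < ∑ j, (μ (A j)).toReal) :
    (∑ j, (μ (A j)).toReal) ^ 2 / (∑ j, ∑ k, (μ (A j ∩ A k)).toReal)
      ≤ (μ (⋃ j, A j)).toReal :=
  stmt2_general μ n A hA
end

section
/- Let {Rₙ} be measurable subsets of a probability space with the following properties: there exist constants c₁ ≥ 0 and, for each N, an index set I_N ⊆ ℕ with min I_N → ∞ as N → ∞, such that (i) σ_N − c₁ ≤ S_N ≤ σ_N + c₁, where S_N = ∑_{j∈I_N} μ(R_j) and σ_N = ∑_{j∈I_N} M_j for some M_j > 0; (ii) C_N := ∑_{j,k∈I_N} μ(R_j ∩ R_k) ≤ (1 + ε_N)σ_N² + c₄σ_N + c₅ with ε_N → 0 and constants c₄, c₅; and (iii) limsup_N σ_N = ∞. Then μ(limsup_N ⋃_{j∈I_N} R_j) = 1 and in particular μ(limsupₙ Rₙ) = 1 provided ⋃_{j∈I_N} R_j ⊆ ⋃_{j≥min I_N} R_j. -/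
/-!
Chung–Erdős: `f = ∑_{j ∈ I} 1_{R_j}` vanishes off `U = ⋃_{j ∈ I} R_j`, so Cauchy–Schwarz gives
`(∑ μ R_j)² = (∫ f)² ≤ ∫ f² · μ U = (∑∑ μ (R_j ∩ R_k)) · μ U`. Along a subsequence with `σ_N → ∞`
the hypotheses turn this into `μ U_N ≥ (σ_N - c₁)² / ((1 + ε_N) σ_N² + c₄ σ_N + c₅) → 1`, and
`μ (limsup U_N) ≥ limsup μ U_N` for a finite measure.
-/

open MeasureTheory Filter Finset
open scoped ENNReal Topology

section
variable {α ι : Type*} [MeasurableSpace α] {μ : Measure α}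

theorem lintegral_sq_le_lintegral_sq_mul_measure {f : α → ℝ≥0∞} (hf : AEMeasurable f μ)
    {s : Set α} (hfs : f.support ⊆ s) :
    (∫⁻ x, f x ∂μ) ^ 2 ≤ (∫⁻ x, f x ^ 2 ∂μ) * μ s := by
  have rpow_half_sq (x : ℝ≥0∞) : (x ^ (1 / 2 : ℝ)) ^ 2 = x := by
    rw [← ENNReal.rpow_natCast, ← ENNReal.rpow_mul]; norm_num
  have holder := ENNReal.lintegral_mul_le_Lp_mul_Lq (μ.restrict s) .two_two hf.restrict
    (aemeasurable_const (b := (1 : ℝ≥0∞)))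
  simp only [Pi.mul_apply, mul_one, ENNReal.rpow_two, one_pow, lintegral_const, one_mul,
    Measure.restrict_apply_univ] at holder
  rw [setLIntegral_eq_of_support_subset hfs] at holder
  calc (∫⁻ x, f x ∂μ) ^ 2
      ≤ ((∫⁻ x in s, f x ^ 2 ∂μ) ^ (1 / 2 : ℝ) * μ s ^ (1 / 2 : ℝ)) ^ 2 := by gcongr
    _ = (∫⁻ x in s, f x ^ 2 ∂μ) * μ s := by rw [mul_pow, rpow_half_sq, rpow_half_sq]
    _ ≤ (∫⁻ x, f x ^ 2 ∂μ) * μ s := by gcongr; exact Measure.restrict_le_self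

theorem limsup_measure_le_measure_limsup [IsFiniteMeasure μ] {s : ℕ → Set α}
    (hs : ∀ n, NullMeasurableSet (s n) μ) :
    limsup (fun n => μ (s n)) atTop ≤ μ (limsup s atTop) := by
  have tail_antitone : Antitone fun n => ⋃ i ≥ n, s i :=
    fun m n hmn => Set.biUnion_mono (fun i (hi : n ≤ i) => hmn.trans hi) fun _ _ => le_rfl
  rw [limsup_eq_iInf_iSup_of_nat, limsup_eq_iInf_iSup_of_nat]
  simp only [Set.iSup_eq_iUnion, Set.iInf_eq_iInter]
  rw [tail_antitone.measure_iInter (fun n => .iUnion fun i => .iUnion fun _ => hs i)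
    ⟨0, measure_ne_top μ _⟩]
  exact iInf_mono fun n => iSup₂_le fun i hi => measure_mono (Set.subset_biUnion_of_mem hi)

theorem measure_limsup_eq_one [IsProbabilityMeasure μ] {s : ℕ → Set α}
    (hs : ∀ n, NullMeasurableSet (s n) μ) (h : ∀ b < 1, ∃ᶠ n in atTop, b ≤ μ (s n)) :
    μ (limsup s atTop) = 1 :=
  le_antisymm prob_le_one <| le_of_forall_lt_imp_le_of_dense fun b hb =>
    (le_limsup_of_frequently_le (h b hb)).trans (limsup_measure_le_measure_limsup hs)

theorem sq_sum_measure_le_sum_measure_inter_mul_measure_biUnion {s : ι → Set α} {I : Finset ι}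
    (hs : ∀ i ∈ I, MeasurableSet (s i)) :
    (∑ i ∈ I, μ (s i)) ^ 2 ≤ (∑ i ∈ I, ∑ j ∈ I, μ (s i ∩ s j)) * μ (⋃ i ∈ I, s i) := by
  set f : α → ℝ≥0∞ := fun x => ∑ i ∈ I, (s i).indicator 1 x
  have hf : Measurable f := Finset.measurable_sum _ fun i hi => measurable_one.indicator (hs i hi)
  have hf_support : f.support ⊆ ⋃ i ∈ I, s i := by
    intro x hx
    obtain ⟨i, hi, hxi⟩ := Finset.exists_ne_zero_of_sum_ne_zero hx
    exact Set.mem_biUnion hi (Set.mem_of_indicator_ne_zero hxi)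
  have hf_sq (x : α) : f x ^ 2 = ∑ i ∈ I, ∑ j ∈ I, (s i ∩ s j).indicator 1 x := by
    simp only [f, sq, Finset.sum_mul_sum, Set.inter_indicator_one, Pi.mul_apply]
  have hf_int : ∫⁻ x, f x ∂μ = ∑ i ∈ I, μ (s i) := by
    rw [lintegral_finsetSum _ fun i hi => measurable_one.indicator (hs i hi)]
    exact Finset.sum_congr rfl fun i hi => lintegral_indicator_one (hs i hi)
  have hf_sq_int : ∫⁻ x, f x ^ 2 ∂μ = ∑ i ∈ I, ∑ j ∈ I, μ (s i ∩ s j) := by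
    simp_rw [hf_sq]
    rw [lintegral_finsetSum _ fun i hi => Finset.measurable_sum _ fun j hj =>
      measurable_one.indicator ((hs i hi).inter (hs j hj))]
    refine Finset.sum_congr rfl fun i hi => ?_
    rw [lintegral_finsetSum _ fun j hj => measurable_one.indicator ((hs i hi).inter (hs j hj))]
    exact Finset.sum_congr rfl fun j hj => lintegral_indicator_one ((hs i hi).inter (hs j hj))
  simpa only [hf_int, hf_sq_int] using
    lintegral_sq_le_lintegral_sq_mul_measure (μ := μ) hf.aemeasurable hf_support

theorem sq_sum_measureReal_le_sum_measureReal_inter_mul_measureReal_biUnion [IsFiniteMeasure μ]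
    {s : ι → Set α} {I : Finset ι} (hs : ∀ i ∈ I, MeasurableSet (s i)) :
    (∑ i ∈ I, μ.real (s i)) ^ 2 ≤
      (∑ i ∈ I, ∑ j ∈ I, μ.real (s i ∩ s j)) * μ.real (⋃ i ∈ I, s i) := by
  have h := ENNReal.toReal_mono (by simp [ENNReal.mul_eq_top])
    (sq_sum_measure_le_sum_measure_inter_mul_measure_biUnion (μ := μ) hs)
  simpa [measureReal_def, ENNReal.toReal_sum] using h

theorem sq_div_le_measureReal_biUnion [IsFiniteMeasure μ] {s : ι → Set α} {I : Finset ι}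
    (hs : ∀ i ∈ I, MeasurableSet (s i)) {a D : ℝ} (ha : 0 ≤ a)
    (ha_le : a ≤ ∑ i ∈ I, μ.real (s i)) (hD : ∑ i ∈ I, ∑ j ∈ I, μ.real (s i ∩ s j) ≤ D) :
    a ^ 2 / D ≤ μ.real (⋃ i ∈ I, s i) := by
  rcases le_or_gt D 0 with hD_nonpos | hD_pos
  · exact (div_nonpos_of_nonneg_of_nonpos (sq_nonneg a) hD_nonpos).trans measureReal_nonneg
  rw [div_le_iff₀ hD_pos]
  calc a ^ 2 ≤ (∑ i ∈ I, μ.real (s i)) ^ 2 := pow_le_pow_left₀ ha ha_le 2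
    _ ≤ (∑ i ∈ I, ∑ j ∈ I, μ.real (s i ∩ s j)) * μ.real (⋃ i ∈ I, s i) :=
      sq_sum_measureReal_le_sum_measureReal_inter_mul_measureReal_biUnion hs
    _ ≤ μ.real (⋃ i ∈ I, s i) * D := by rw [mul_comm]; gcongr

end

theorem limsup_biUnion_subset_limsup {α : Type*} {s : ℕ → Set α} {I : ℕ → Finset ℕ}
    (hI : ∀ K, ∀ᶠ N in atTop, ∀ j ∈ I N, K ≤ j) :
    limsup (fun N => ⋃ j ∈ I N, s j) atTop ⊆ limsup s atTop := by
  intro x hx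
  rw [mem_limsup_iff_frequently_mem] at hx
  rw [mem_limsup_iff_frequently_mem, frequently_atTop]
  intro K
  obtain ⟨N, hxN, hIN⟩ := (hx.and_eventually (hI K)).exists
  obtain ⟨j, hj, hxj⟩ := Set.mem_iUnion₂.1 hxN
  exact ⟨j, hIN j hj, hxj⟩

theorem tendsto_sq_sub_div_quadratic {ι : Type*} {l : Filter ι} {σ ε : ι → ℝ}
    (hσ : Tendsto σ l atTop) (hε : Tendsto ε l (𝓝 0)) (c₁ c₄ c₅ : ℝ) :
    Tendsto (fun i => (σ i - c₁) ^ 2 / ((1 + ε i) * σ i ^ 2 + c₄ * σ i + c₅)) l (𝓝 1) := by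
  have hinv : Tendsto (fun i => (σ i)⁻¹) l (𝓝 0) := tendsto_inv_atTop_zero.comp hσ
  have hlim : Tendsto (fun i => (1 - c₁ * (σ i)⁻¹) ^ 2 /
      (1 + ε i + c₄ * (σ i)⁻¹ + c₅ * ((σ i)⁻¹) ^ 2)) l (𝓝 1) := by
    simpa [Pi.div_def] using
      (((tendsto_const_nhds (x := (1 : ℝ))).sub (hinv.const_mul c₁)).pow 2).div
      (((tendsto_const_nhds.add hε).add (hinv.const_mul c₄)).add ((hinv.pow 2).const_mul c₅))
      (by norm_num : (1 + 0 + c₄ * 0 + c₅ * 0 ^ 2 : ℝ) ≠ 0)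
  refine hlim.congr' ?_
  filter_upwards [hσ.eventually_ne_atTop 0] with i hi
  field_simp

theorem stmt11_general {Ω : Type*} [MeasurableSpace Ω] (μ : Measure Ω) [IsProbabilityMeasure μ]
    (R : ℕ → Set Ω) (hR : ∀ n, MeasurableSet (R n))
    (I : ℕ → Finset ℕ)
    (hmin : ∀ K : ℕ, ∀ᶠ N in atTop, ∀ j ∈ I N, K ≤ j)
    (M : ℕ → ℝ) (c₁ : ℝ)
    (hS : ∀ N, (∑ j ∈ I N, M j) - c₁ ≤ ∑ j ∈ I N, (μ (R j)).toReal ∧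
      ∑ j ∈ I N, (μ (R j)).toReal ≤ (∑ j ∈ I N, M j) + c₁)
    (ε : ℕ → ℝ) (hε : Tendsto ε atTop (nhds 0)) (c₄ c₅ : ℝ)
    (hC : ∀ N, ∑ j ∈ I N, ∑ k ∈ I N, (μ (R j ∩ R k)).toReal
      ≤ (1 + ε N) * (∑ j ∈ I N, M j) ^ 2 + c₄ * (∑ j ∈ I N, M j) + c₅)
    (hσ : ∀ K : ℝ, ∃ᶠ N in atTop, K ≤ ∑ j ∈ I N, M j) :
    μ (Filter.limsup (fun N => ⋃ j ∈ I N, R j) Filter.atTop) = 1 ∧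
      μ (Filter.limsup R Filter.atTop) = 1 := by
  set σ := fun N => ∑ j ∈ I N, M j
  obtain ⟨φ, hφ, hσφ⟩ := extraction_forall_of_frequently fun n : ℕ => hσ n
  have hσφ_tendsto : Tendsto (σ ∘ φ) atTop atTop :=
    tendsto_atTop_mono hσφ tendsto_natCast_atTop_atTop
  have hratio := tendsto_sq_sub_div_quadratic hσφ_tendsto (hε.comp hφ.tendsto_atTop) c₁ c₄ c₅
  have hlower : ∀ᶠ n in atTop, ENNReal.ofReal ((σ (φ n) - c₁) ^ 2 /
      ((1 + ε (φ n)) * σ (φ n) ^ 2 + c₄ * σ (φ n) + c₅)) ≤ μ (⋃ j ∈ I (φ n), R j) := by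
    filter_upwards [hσφ_tendsto.eventually_ge_atTop c₁] with n hn
    exact ENNReal.ofReal_le_of_le_toReal <| sq_div_le_measureReal_biUnion (fun j _ => hR j)
      (sub_nonneg.2 hn) (hS (φ n)).1 (hC (φ n))
  have hfreq : ∀ b < 1, ∃ᶠ N in atTop, b ≤ μ (⋃ j ∈ I N, R j) := by
    intro b hb
    have hb' : b < ENNReal.ofReal 1 := by simpa using hb
    refine hφ.tendsto_atTop.frequently (Eventually.frequently ?_)
    filter_upwards [(ENNReal.tendsto_ofReal hratio).eventually (lt_mem_nhds hb'), hlower]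
      with n hb_lt hle
    exact hb_lt.le.trans hle
  have hlimsup : μ (limsup (fun N => ⋃ j ∈ I N, R j) atTop) = 1 :=
    measure_limsup_eq_one (fun N => (MeasurableSet.biUnion (I N).countable_toSet
      fun j _ => hR j).nullMeasurableSet) hfreq
  refine ⟨hlimsup, le_antisymm prob_le_one ?_⟩
  exact hlimsup ▸ measure_mono (limsup_biUnion_subset_limsup hmin)

/-- abstract divergence Borel–Cantelli via the Chung–Erdős
inequality: quasi-independence of the blocks `I_N` with `limsup σ_N = ∞` gives a
full-measure limsup set. -/
theorem stmt11 {Ω : Type*} [MeasurableSpace Ω] (μ : Measure Ω) [IsProbabilityMeasure μ]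
    (R : ℕ → Set Ω) (hR : ∀ n, MeasurableSet (R n))
    (I : ℕ → Finset ℕ)
    (hmin : ∀ K : ℕ, ∀ᶠ N in atTop, ∀ j ∈ I N, K ≤ j)
    (M : ℕ → ℝ) (hM : ∀ j, 0 < M j) (c₁ : ℝ) (hc₁ : 0 ≤ c₁)
    (hS : ∀ N, (∑ j ∈ I N, M j) - c₁ ≤ ∑ j ∈ I N, (μ (R j)).toReal ∧
      ∑ j ∈ I N, (μ (R j)).toReal ≤ (∑ j ∈ I N, M j) + c₁)
    (ε : ℕ → ℝ) (hε : Tendsto ε atTop (nhds 0)) (c₄ c₅ : ℝ)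
    (hC : ∀ N, ∑ j ∈ I N, ∑ k ∈ I N, (μ (R j ∩ R k)).toReal
      ≤ (1 + ε N) * (∑ j ∈ I N, M j) ^ 2 + c₄ * (∑ j ∈ I N, M j) + c₅)
    (hσ : ∀ K : ℝ, ∃ᶠ N in atTop, K ≤ ∑ j ∈ I N, M j) :
    μ (Filter.limsup (fun N => ⋃ j ∈ I N, R j) Filter.atTop) = 1 ∧
      μ (Filter.limsup R Filter.atTop) = 1 :=
  stmt11_general μ R hR I hmin M c₁ hS ε hε c₄ c₅ hC hσ
end

section
/- Let (X, μ, T) be a probability measure-preserving system on X = [0,1] whose correlations decay as p for L¹ against BV, let f : [0,1] → [0,1] be L-Lipschitz and monotone, let Mₙ, M_{n+m} ∈ (0,1) with corresponding radius functions rₙ, r_{n+m} (1-Lipschitz, with μ(B(x,rₙ(x))) = Mₙ), and suppose μ is upper Ahlfors regular with exponent s and constant c. Define R_j = {x : |T^j x − f(x)| < r_j(f(x))}. Then there exist positive constants K₁, K₂, K₃ depending only on L, c, s, and sup_n p(n), such that for all n, m ∈ ℕ: μ(Rₙ ∩ R_{n+m}) ≤ Mₙ M_{n+m}(1 + K₁√p(n))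 + K₂(Mₙ p(n)^{s/2} + M_{n+m}(p(n)^{s/2} + p(m))) + K₃ p(n)^s. -/
open MeasureTheory Set

/-- The BV norm of `h` on `[0,1]`: total variation plus sup norm. -/
noncomputable def BVNorm (h : ℝ → ℝ) : ℝ :=
  (eVariationOn h (Set.Icc (0:ℝ) 1)).toReal + ⨆ x : Set.Icc (0:ℝ) 1, |h ↑x|

/-!
Cut `[0,1]` into cells of length `Δ`. Along a cell the centre `f x` and the radii `rⱼ (f x)`
move by at most `LΔ`, so `Tⁿ` maps the part of `Rₙ ∩ Rₙ₊ₘ` in the cell into one fixed target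
`B₁ ∩ T⁻ᵐ B₂`, where `B₁, B₂` are the balls around a single point thickened by `O(Δ)`.
Decay of correlations against the indicator of the cell, and then against the indicator of
`B₁` (indicators of intervals have BV norm at most `3`), bounds the cell part by
`μ B₂ (μ B₁ + 3 p m) (μ cell + 3 p n)`, and upper Ahlfors regularity says that thickening a ball
by `e` adds at most `2 c eˢ` to its measure. Summing over the `≈ 1/Δ` cells, the scale
`Δ = √(p n)` proves the estimate when `M (n + m) ≳ p n ^ (s/2)`, and `Δ = p n` otherwise.
-/

open Metric

lemma eVariationOn_sub_le {α : Type*} [LinearOrder α] (f g : α → ℝ) (s : Set α) :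
    eVariationOn (f - g) s ≤ eVariationOn f s + eVariationOn g s := by
  refine iSup_le fun ⟨n, u, hu, us⟩ => ?_
  calc ∑ i ∈ Finset.range n, edist ((f - g) (u (i + 1))) ((f - g) (u i))
      ≤ ∑ i ∈ Finset.range n,
          (edist (f (u (i + 1))) (f (u i)) + edist (g (u (i + 1))) (g (u i))) :=
        Finset.sum_le_sum fun i _ => by
          simpa only [Pi.sub_apply, sub_eq_add_neg, edist_neg_neg] using
            edist_add_add_le (f (u (i + 1))) (-g (u (i + 1))) (f (u i)) (-g (u i))
    _ ≤ eVariationOn f s + eVariationOn g s := by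
        rw [Finset.sum_add_distrib]
        exact add_le_add (eVariationOn.sum_le hu us) (eVariationOn.sum_le hu us)

lemma IsUpperSet.monotone_indicator_one {α : Type*} [Preorder α] {U : Set α}
    (hU : IsUpperSet U) : Monotone (U.indicator (1 : α → ℝ)) := by
  intro a b hab
  by_cases ha : a ∈ U
  · simp [ha, hU hab ha]
  · simp only [indicator_of_notMem ha]
    exact indicator_nonneg (fun _ _ => zero_le_one) b

lemma IsUpperSet.eVariationOn_indicator_one_le {α : Type*} [LinearOrder α] {U : Set α}
    (hU : IsUpperSet U) (a b : α) : eVariationOn (U.indicator (1 : α → ℝ)) (Icc a b) ≤ 1 := by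
  have h := (hU.monotone_indicator_one.monotoneOn univ).eVariationOn_eq (mem_univ a) (mem_univ b)
  rw [univ_inter] at h
  rw [h, ← ENNReal.ofReal_one]
  refine ENNReal.ofReal_le_ofReal ?_
  have h0 : 0 ≤ U.indicator (1 : α → ℝ) a := indicator_nonneg (fun _ _ => zero_le_one) a
  have h1 : U.indicator (1 : α → ℝ) b ≤ 1 := indicator_le_self' (fun _ _ => zero_le_one) b
  linarith

lemma Set.OrdConnected.eVariationOn_indicator_one_le {α : Type*} [LinearOrder α] {B : Set α}
    (hB : OrdConnected B) (a b : α) : eVariationOn (B.indicator (1 : α → ℝ)) (Icc a b) ≤ 2 := by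
  -- `B = U \ (U \ B)` for its upper closure `U`, and `U \ B` is again an upper set.
  set U := {x | ∃ y ∈ B, y ≤ x}
  have hU : IsUpperSet U := fun x x' hxx' ⟨y, hy, hyx⟩ => ⟨y, hy, hyx.trans hxx'⟩
  have hV : IsUpperSet (U \ B) := fun x x' hxx' ⟨⟨y, hy, hyx⟩, hx⟩ =>
    ⟨⟨y, hy, hyx.trans hxx'⟩, fun hx' => hx (hB.out hy hx' ⟨hyx, hxx'⟩)⟩
  have hsplit : B.indicator (1 : α → ℝ) = U.indicator 1 - (U \ B).indicator 1 := by
    rw [indicator_sdiff (show B ⊆ U from fun x hx => ⟨x, hx, le_rfl⟩)]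
    exact (_root_.sub_sub_cancel _ _).symm
  rw [hsplit]
  calc _ ≤ _ := eVariationOn_sub_le _ _ _
    _ ≤ 1 + 1 :=
        add_le_add (hU.eVariationOn_indicator_one_le a b) (hV.eVariationOn_indicator_one_le a b)
    _ = 2 := one_add_one_eq_two

lemma BVNorm_indicator_one_le {B : Set ℝ} (hB : OrdConnected B) :
    BVNorm (B.indicator 1) ≤ 3 := by
  have hvar : (eVariationOn (B.indicator (1 : ℝ → ℝ)) (Icc 0 1)).toReal ≤ 2 :=
    ENNReal.toReal_le_of_le_ofReal zero_le_two (by simpa using hB.eVariationOn_indicator_one_le 0 1)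
  have hsup : ⨆ x : Icc (0:ℝ) 1, |B.indicator (1 : ℝ → ℝ) x| ≤ 1 :=
    Real.iSup_le (fun x => by by_cases h : (x : ℝ) ∈ B <;> simp [h]) zero_le_one
  unfold BVNorm
  linarith

def HasCorrelationDecay (μ : Measure ℝ) (T : ℝ → ℝ) (p : ℕ → ℝ) : Prop :=
  ∀ n : ℕ, ∀ g h : ℝ → ℝ, Integrable g μ → eVariationOn h (Icc (0:ℝ) 1) ≠ ⊤ →
    |∫ x, g (T^[n] x) * h x ∂μ - (∫ x, g x ∂μ) * ∫ x, h x ∂μ|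
      ≤ (∫ x, |g x| ∂μ) * BVNorm h * p n

lemma HasCorrelationDecay.measureReal_preimage_inter_le {μ : Measure ℝ} [IsFiniteMeasure μ]
    {T : ℝ → ℝ} {p : ℕ → ℝ} (hdecay : HasCorrelationDecay μ T p) (hT : Measurable T) {k : ℕ}
    (hpk : 0 ≤ p k) {A B : Set ℝ} (hA : MeasurableSet A) (hB : MeasurableSet B)
    (hBc : OrdConnected B) :
    μ.real (T^[k] ⁻¹' A ∩ B) ≤ μ.real A * μ.real B + 3 * μ.real A * p k := by
  have key := hdecay k (A.indicator 1) (B.indicator 1) ((integrable_const 1).indicator hA)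
    (ne_top_of_le_ne_top ENNReal.ofNat_ne_top (hBc.eVariationOn_indicator_one_le 0 1))
  have hprod : (fun x => A.indicator (1 : ℝ → ℝ) (T^[k] x) * B.indicator 1 x)
      = (T^[k] ⁻¹' A ∩ B).indicator 1 := by
    rw [inter_indicator_one]; rfl
  have habs : (fun x => |A.indicator (1 : ℝ → ℝ) x|) = A.indicator 1 := by
    ext x; by_cases h : x ∈ A <;> simp [h]
  rw [hprod, habs, integral_indicator_one ((hT.iterate k hA).inter hB),
    integral_indicator_one hA, integral_indicator_one hB] at key
  have hBV : μ.real A * BVNorm (B.indicator 1) * p k ≤ μ.real A * 3 * p k := by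
    gcongr
    exact BVNorm_indicator_one_le hBc
  linarith [(abs_le.1 key).2]

def IsUpperAhlforsRegular (μ : Measure ℝ) (s c : ℝ) : Prop :=
  ∀ x ∈ Icc (0:ℝ) 1, ∀ ρ : ℝ, 0 < ρ → μ.real (ball x ρ ∩ Icc 0 1) ≤ c * ρ ^ s

lemma dist_projIcc_le {a b x : ℝ} (h : a ≤ b) (hx : x ∈ Icc a b) (y : ℝ) :
    dist x (projIcc a b h y) ≤ dist x y := by
  simpa [projIcc_of_mem h hx, Subtype.dist_eq, one_mul] using
    (LipschitzWith.projIcc h).dist_le_mul x y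

lemma ball_inter_Icc_subset_ball_projIcc {a b : ℝ} (h : a ≤ b) (y e : ℝ) :
    ball y e ∩ Icc a b ⊆ ball (projIcc a b h y) e :=
  fun _ ⟨hxy, hx⟩ => (dist_projIcc_le h hx y).trans_lt hxy

lemma IsUpperAhlforsRegular.measureReal_ball_inter_Icc_le {μ : Measure ℝ} [IsFiniteMeasure μ]
    {s c : ℝ} (hreg : IsUpperAhlforsRegular μ s c) (y : ℝ) {e : ℝ} (he : 0 < e) :
    μ.real (ball y e ∩ Icc 0 1) ≤ c * e ^ s := by
  set z := projIcc 0 1 zero_le_one y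
  calc μ.real (ball y e ∩ Icc 0 1) ≤ μ.real (ball (z : ℝ) e ∩ Icc 0 1) :=
        measureReal_mono
          (subset_inter (ball_inter_Icc_subset_ball_projIcc _ y e) inter_subset_right)
    _ ≤ c * e ^ s := hreg z z.2 e he

lemma ball_add_subset (y ρ e : ℝ) :
    ball y (ρ + e) ⊆ ball y ρ ∪ (ball (y + ρ) e ∪ ball (y - ρ) e) := by
  intro z hz
  simp only [mem_union, mem_ball, Real.dist_eq, abs_lt] at hz ⊢
  by_cases h : -ρ < z - y ∧ z - y < ρ
  · exact Or.inl h
  · right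
    rcases not_and_or.1 h with h | h
    · right; constructor <;> linarith
    · left; constructor <;> linarith

lemma IsUpperAhlforsRegular.measureReal_ball_add_le {μ : Measure ℝ} [IsFiniteMeasure μ]
    {s c : ℝ} (hreg : IsUpperAhlforsRegular μ s c) (y ρ : ℝ) {e : ℝ} (he : 0 < e) :
    μ.real (ball y (ρ + e) ∩ Icc 0 1) ≤ μ.real (ball y ρ ∩ Icc 0 1) + 2 * (c * e ^ s) := by
  have hsub : ball y (ρ + e) ∩ Icc 0 1 ⊆ (ball y ρ ∩ Icc 0 1) ∪
      ((ball (y + ρ) e ∩ Icc 0 1) ∪ (ball (y - ρ) e ∩ Icc 0 1)) := by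
    rw [← union_inter_distrib_right, ← union_inter_distrib_right]
    exact inter_subset_inter_left _ (ball_add_subset y ρ e)
  linarith [measureReal_mono (μ := μ) hsub, measureReal_union_le (μ := μ) (ball y ρ ∩ Icc 0 1)
    ((ball (y + ρ) e ∩ Icc 0 1) ∪ (ball (y - ρ) e ∩ Icc 0 1)),
    measureReal_union_le (μ := μ) (ball (y + ρ) e ∩ Icc 0 1) (ball (y - ρ) e ∩ Icc 0 1),
    hreg.measureReal_ball_inter_Icc_le (y + ρ) he, hreg.measureReal_ball_inter_Icc_le (y - ρ) he]

lemma measureReal_inter_eq_of_measure_eq_one {α : Type*} [MeasurableSpace α] {μ : Measure α}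
    [IsProbabilityMeasure μ] {K : Set α} (hK : MeasurableSet K) (hμK : μ K = 1) (A : Set α) :
    μ.real (A ∩ K) = μ.real A := by
  simp only [Measure.real, measure_inter_conull ((prob_compl_eq_zero_iff hK).2 hμK)]

lemma IsUpperAhlforsRegular.measureReal_ball_add_le_of_eq {μ : Measure ℝ} [IsProbabilityMeasure μ]
    (hX : μ (Icc (0:ℝ) 1) = 1) {s c : ℝ} (hreg : IsUpperAhlforsRegular μ s c) {ρ : ℝ → ℝ}
    {M : ℝ} (hM : ∀ x ∈ Icc (0:ℝ) 1, μ.real (ball x (ρ x) ∩ Icc 0 1) = M) {y e : ℝ}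
    (hy : y ∈ Icc 0 1) (he : 0 < e) :
    μ.real (ball y (ρ y + e)) ≤ M + 2 * (c * e ^ s) := by
  rw [← measureReal_inter_eq_of_measure_eq_one measurableSet_Icc hX, ← hM y hy]
  exact hreg.measureReal_ball_add_le y (ρ y) he

def gridCell (Δ : ℝ) (k : ℕ) : Set ℝ := Ico (k * Δ) ((k + 1) * Δ)

lemma Icc_subset_biUnion_gridCell {Δ : ℝ} (hΔ : 0 < Δ) :
    Icc 0 1 ⊆ ⋃ k ∈ Finset.range (⌊1 / Δ⌋₊ + 1), gridCell Δ k := by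
  intro x ⟨hx0, hx1⟩
  have hk : ⌊x / Δ⌋₊ < ⌊1 / Δ⌋₊ + 1 :=
    Nat.lt_succ_of_le (Nat.floor_le_floor (div_le_div_of_nonneg_right hx1 hΔ.le))
  refine mem_biUnion (Finset.mem_range.2 hk) ⟨?_, ?_⟩
  · exact (le_div_iff₀ hΔ).1 (Nat.floor_le (div_nonneg hx0 hΔ.le))
  · exact (div_lt_iff₀ hΔ).1 (Nat.lt_floor_add_one _)

lemma pairwise_disjoint_gridCell (Δ : ℝ) : Pairwise (Function.onFun Disjoint (gridCell Δ)) := by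
  intro k l hkl
  refine disjoint_left.2 fun x ⟨hk1, hk2⟩ ⟨hl1, hl2⟩ => hkl ?_
  have hΔ : 0 < Δ := by nlinarith
  have h1 : (k : ℝ) < l + 1 := lt_of_mul_lt_mul_right (hk1.trans_lt hl2) hΔ.le
  have h2 : (l : ℝ) < k + 1 := lt_of_mul_lt_mul_right (hl1.trans_lt hk2) hΔ.le
  have : k < l + 1 := by exact_mod_cast h1
  have : l < k + 1 := by exact_mod_cast h2
  omega

lemma sum_measureReal_gridCell_le_one {μ : Measure ℝ} [IsProbabilityMeasure μ] (Δ : ℝ) (N : ℕ) :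
    ∑ k ∈ Finset.range N, μ.real (gridCell Δ k) ≤ 1 := by
  rw [← measureReal_biUnion_finset (fun k _ l _ hkl => pairwise_disjoint_gridCell Δ hkl)
    (fun _ _ => measurableSet_Ico)]
  exact measureReal_le_one

lemma dist_projIcc_le_of_mem_gridCell {Δ x : ℝ} {k : ℕ} (hx : x ∈ gridCell Δ k ∩ Icc 0 1) :
    dist x (projIcc 0 1 zero_le_one (k * Δ)) ≤ Δ := by
  refine (dist_projIcc_le _ hx.2 _).trans ?_
  rw [Real.dist_eq, abs_of_nonneg (by linarith [hx.1.1])]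
  linarith [hx.1.2]

def recurrenceSet (T f ρ : ℝ → ℝ) (j : ℕ) : Set ℝ :=
  {x ∈ Icc 0 1 | |T^[j] x - f x| < ρ (f x)}

def thickenedTarget (T ρ₁ ρ₂ : ℝ → ℝ) (m : ℕ) (e y : ℝ) : Set ℝ :=
  ball y (ρ₁ y + e) ∩ T^[m] ⁻¹' ball y (ρ₂ y + e)

lemma mem_ball_of_dist_le {f ρ : ℝ → ℝ} {L : NNReal} {s : Set ℝ} (hf : LipschitzOnWith L f s)
    (hρ : LipschitzWith 1 ρ) {x z w Δ : ℝ} (hx : x ∈ s) (hz : z ∈ s) (hxz : dist x z ≤ Δ)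
    (hw : |w - f x| < ρ (f x)) : w ∈ ball (f z) (ρ (f z) + 2 * L * Δ) := by
  have hfxz : dist (f x) (f z) ≤ L * Δ := (hf.dist_le_mul x hx z hz).trans (by gcongr)
  have hρxz : ρ (f x) ≤ ρ (f z) + dist (f x) (f z) := by
    simpa using hρ.le_add_mul (f x) (f z)
  calc dist w (f z) ≤ dist w (f x) + dist (f x) (f z) := dist_triangle _ _ _
    _ < ρ (f x) + L * Δ := add_lt_add_of_lt_of_le (by rwa [Real.dist_eq]) hfxz
    _ ≤ ρ (f z) + 2 * L * Δ := by linarith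

lemma recurrenceSet_inter_gridCell_subset {T f ρ₁ ρ₂ : ℝ → ℝ} {L : NNReal}
    (hf : LipschitzOnWith L f (Icc 0 1)) (hρ₁ : LipschitzWith 1 ρ₁) (hρ₂ : LipschitzWith 1 ρ₂)
    {Δ e : ℝ} (he : 2 * L * Δ ≤ e) (n m k : ℕ) :
    recurrenceSet T f ρ₁ n ∩ recurrenceSet T f ρ₂ (n + m) ∩ gridCell Δ k ⊆
      T^[n] ⁻¹' thickenedTarget T ρ₁ ρ₂ m e (f (projIcc 0 1 zero_le_one (k * Δ))) := by
  rintro x ⟨⟨⟨hx, hxn⟩, -, hxnm⟩, hxk⟩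
  set z := projIcc 0 1 zero_le_one (k * Δ)
  have hxz := dist_projIcc_le_of_mem_gridCell ⟨hxk, hx⟩
  have hball : ∀ ρ, LipschitzWith 1 ρ → ∀ w, |w - f x| < ρ (f x) → w ∈ ball (f z) (ρ (f z) + e) :=
    fun ρ hρ w hw => ball_subset_ball (by linarith) (mem_ball_of_dist_le hf hρ hx z.2 hxz hw)
  refine ⟨hball ρ₁ hρ₁ _ hxn, ?_⟩
  rw [mem_preimage, ← Function.iterate_add_apply, Nat.add_comm m n]
  exact hball ρ₂ hρ₂ _ hxnm

lemma HasCorrelationDecay.measureReal_recurrenceSet_inter_le {μ : Measure ℝ}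
    [IsProbabilityMeasure μ] {T f ρ₁ ρ₂ : ℝ → ℝ} {p : ℕ → ℝ} {L : NNReal}
    (hdecay : HasCorrelationDecay μ T p) (hT : Measurable T) {n m : ℕ} (hpn : 0 ≤ p n)
    (hf : LipschitzOnWith L f (Icc 0 1)) (hfmaps : MapsTo f (Icc 0 1) (Icc 0 1))
    (hρ₁ : LipschitzWith 1 ρ₁) (hρ₂ : LipschitzWith 1 ρ₂) {Δ e V : ℝ} (hΔ : 0 < Δ)
    (he : 2 * L * Δ ≤ e) (hV : ∀ y ∈ Icc (0:ℝ) 1, μ.real (thickenedTarget T ρ₁ ρ₂ m e y) ≤ V) :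
    μ.real (recurrenceSet T f ρ₁ n ∩ recurrenceSet T f ρ₂ (n + m))
      ≤ (1 + 3 * p n * (1 / Δ + 1)) * V := by
  set S := recurrenceSet T f ρ₁ n ∩ recurrenceSet T f ρ₂ (n + m)
  set N := ⌊1 / Δ⌋₊ + 1
  set A : ℕ → Set ℝ := fun k => thickenedTarget T ρ₁ ρ₂ m e (f (projIcc 0 1 zero_le_one (k * Δ)))
  have hAV : ∀ k, μ.real (A k) ≤ V := fun k => hV _ (hfmaps (Subtype.mem _))
  have hV0 : 0 ≤ V := measureReal_nonneg.trans (hAV 0)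
  have hcover : S ⊆ ⋃ k ∈ Finset.range N, S ∩ gridCell Δ k := fun x hx => by
    obtain ⟨k, hk, hxk⟩ := mem_iUnion₂.1 (Icc_subset_biUnion_gridCell hΔ hx.1.1)
    exact mem_biUnion hk ⟨hx, hxk⟩
  have hcell (k : ℕ) : μ.real (S ∩ gridCell Δ k) ≤ V * μ.real (gridCell Δ k) + 3 * V * p n :=
    calc μ.real (S ∩ gridCell Δ k) ≤ μ.real (T^[n] ⁻¹' A k ∩ gridCell Δ k) :=
          measureReal_mono (subset_inter (recurrenceSet_inter_gridCell_subset hf hρ₁ hρ₂ he n m k)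
            inter_subset_right)
      _ ≤ μ.real (A k) * μ.real (gridCell Δ k) + 3 * μ.real (A k) * p n :=
          hdecay.measureReal_preimage_inter_le hT hpn
            (measurableSet_ball.inter (hT.iterate m measurableSet_ball)) measurableSet_Ico
            ordConnected_Ico
      _ ≤ V * μ.real (gridCell Δ k) + 3 * V * p n := by
          gcongr <;> exact hAV k
  have hN : (N : ℝ) ≤ 1 / Δ + 1 := by
    push_cast [N]
    linarith [Nat.floor_le (one_div_pos.2 hΔ).le]
  calc μ.real S ≤ ∑ k ∈ Finset.range N, μ.real (S ∩ gridCell Δ k) :=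
        (measureReal_mono hcover (measure_ne_top μ _)).trans (measureReal_biUnion_finset_le _ _)
    _ ≤ ∑ k ∈ Finset.range N, (V * μ.real (gridCell Δ k) + 3 * V * p n) :=
        Finset.sum_le_sum fun k _ => hcell k
    _ = V * ∑ k ∈ Finset.range N, μ.real (gridCell Δ k) + N * (3 * V * p n) := by
        rw [Finset.sum_add_distrib, Finset.mul_sum, Finset.sum_const, Finset.card_range,
          nsmul_eq_mul]
    _ ≤ V * 1 + (1 / Δ + 1) * (3 * V * p n) := by
        gcongr
        exact sum_measureReal_gridCell_le_one Δ N
    _ = (1 + 3 * p n * (1 / Δ + 1)) * V := by ring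

lemma HasCorrelationDecay.measureReal_thickenedTarget_le {μ : Measure ℝ} [IsProbabilityMeasure μ]
    {T : ℝ → ℝ} {p : ℕ → ℝ} (hdecay : HasCorrelationDecay μ T p) (hT : MeasurePreserving T μ μ)
    {m : ℕ} (hpm : 0 ≤ p m) (ρ₁ ρ₂ : ℝ → ℝ) (e y : ℝ) :
    μ.real (thickenedTarget T ρ₁ ρ₂ m e y)
      ≤ μ.real (ball y (ρ₂ y + e)) * (μ.real (ball y (ρ₁ y + e)) + 3 * min 1 (p m)) := by
  set B₁ := ball y (ρ₁ y + e)
  set B₂ := ball y (ρ₂ y + e)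
  have hpre : μ.real (T^[m] ⁻¹' B₂) = μ.real B₂ :=
    (hT.iterate m).measureReal_preimage measurableSet_ball.nullMeasurableSet
  have hsmall : μ.real (thickenedTarget T ρ₁ ρ₂ m e y) ≤ μ.real B₂ :=
    hpre ▸ measureReal_mono inter_subset_right
  have hmixing : μ.real (thickenedTarget T ρ₁ ρ₂ m e y)
      ≤ μ.real B₂ * μ.real B₁ + 3 * μ.real B₂ * p m := by
    rw [thickenedTarget, inter_comm]
    exact hdecay.measureReal_preimage_inter_le hT.measurable hpm measurableSet_ball
      measurableSet_ball (by rw [Real.ball_eq_Ioo]; exact ordConnected_Ioo)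
  have h₁ : 0 ≤ μ.real B₁ := measureReal_nonneg
  have h₂ : 0 ≤ μ.real B₂ := measureReal_nonneg
  -- for `p m ≥ 1` the trivial bound `μ B₂` is the better one
  rcases le_total (p m) 1 with h | h
  · rw [min_eq_right h]; linarith
  · rw [min_eq_left h]; nlinarith

lemma measureReal_recurrenceSet_inter_le_of_regular {μ : Measure ℝ} [IsProbabilityMeasure μ]
    (hX : μ (Icc (0:ℝ) 1) = 1) {T : ℝ → ℝ} (hT : MeasurePreserving T μ μ) {p : ℕ → ℝ}
    (hdecay : HasCorrelationDecay μ T p) {n m : ℕ} (hpn : 0 ≤ p n) (hpm : 0 ≤ p m) {s c : ℝ}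
    (hreg : IsUpperAhlforsRegular μ s c) {ρ₁ ρ₂ : ℝ → ℝ} {M₁ M₂ : ℝ}
    (hρ₁ : LipschitzWith 1 ρ₁) (hρ₂ : LipschitzWith 1 ρ₂)
    (hM₁ : ∀ x ∈ Icc (0:ℝ) 1, μ.real (ball x (ρ₁ x) ∩ Icc 0 1) = M₁)
    (hM₂ : ∀ x ∈ Icc (0:ℝ) 1, μ.real (ball x (ρ₂ x) ∩ Icc 0 1) = M₂)
    {f : ℝ → ℝ} {L : NNReal} (hf : LipschitzOnWith L f (Icc 0 1))
    (hfmaps : MapsTo f (Icc 0 1) (Icc 0 1)) {Δ : ℝ} (hΔ : 0 < Δ) :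
    μ.real (recurrenceSet T f ρ₁ n ∩ recurrenceSet T f ρ₂ (n + m))
      ≤ (1 + 3 * p n * (1 / Δ + 1)) *
        ((M₂ + 2 * (c * (2 * L + 1) ^ s) * Δ ^ s) *
          (M₁ + 2 * (c * (2 * L + 1) ^ s) * Δ ^ s + 3 * min 1 (p m))) := by
  set e := (2 * (L : ℝ) + 1) * Δ
  have he : 0 < e := by positivity
  have hE : c * e ^ s = c * (2 * L + 1) ^ s * Δ ^ s := by
    rw [Real.mul_rpow (by positivity) hΔ.le, mul_assoc]
  refine hdecay.measureReal_recurrenceSet_inter_le hT.measurable hpn hf hfmaps hρ₁ hρ₂ hΔ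
    (by linarith : 2 * L * Δ ≤ e) fun y hy => ?_
  have hB₁ := hreg.measureReal_ball_add_le_of_eq hX hM₁ hy he
  have hB₂ := hreg.measureReal_ball_add_le_of_eq hX hM₂ hy he
  rw [hE, ← mul_assoc] at hB₁ hB₂
  refine (hdecay.measureReal_thickenedTarget_le hT hpm ρ₁ ρ₂ e y).trans ?_
  gcongr
  exact measureReal_nonneg.trans hB₂

noncomputable def quasiIndepBound (K₁ K₂ K₃ s a b q t : ℝ) : ℝ :=
  a * b * (1 + K₁ * Real.sqrt q) + K₂ * (a * q ^ (s / 2) + b * (q ^ (s / 2) + t)) + K₃ * q ^ s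

lemma le_quasiIndepBound_of_sqrt_scale {C s a b q t X : ℝ} (hC : 0 ≤ C) (ha : 0 ≤ a) (ht : 0 ≤ t)
    (hq : 0 < q) (hq1 : q ≤ 1) (hb : C * q ^ (s / 2) ≤ b)
    (hX : X ≤ (1 + 3 * q * (1 / √q + 1)) *
      ((b + 2 * C * √q ^ s) * (a + 2 * C * √q ^ s + 3 * min 1 t))) :
    X ≤ quasiIndepBound 6 (21 * C + 63) (28 * C ^ 2 + 42 * C + 1) s a b q t := by
  have hwu : √q ^ s = q ^ (s / 2) := by rw [Real.sqrt_eq_rpow, ← Real.rpow_mul hq.le]; ring_nf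
  have hu2 : q ^ s = (q ^ (s / 2)) ^ 2 := by
    rw [← Real.rpow_natCast, ← Real.rpow_mul hq.le]; norm_num
  set w := √q
  set u := q ^ (s / 2)
  have hw : 0 < w := Real.sqrt_pos.2 hq
  have hw1 : w ≤ 1 := Real.sqrt_le_one.2 hq1
  have hwq : w ^ 2 = q := Real.sq_sqrt hq.le
  have hu : 0 ≤ u := by positivity
  have hτ0 : 0 ≤ min 1 t := le_min zero_le_one ht
  have hτt : min 1 t ≤ t := min_le_right 1 t
  have hb0 : 0 ≤ b := (mul_nonneg hC hu).trans hb
  have hfactor : 3 * q * (1 / w + 1) ≤ 6 * w := by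
    rw [← hwq, mul_add, mul_one, mul_assoc, one_div, sq, mul_assoc, mul_inv_cancel₀ hw.ne']
    nlinarith
  set R := 2 * C * u * (a + b) + 4 * C ^ 2 * u ^ 2 + 9 * b * t
  have hR : 0 ≤ R := by positivity
  have hW : (b + 2 * C * u) * (a + 2 * C * u + 3 * min 1 t) ≤ a * b + R := by
    nlinarith [mul_nonneg (mul_nonneg hC hu) hτ0, mul_le_mul_of_nonneg_left hτt hb0]
  rw [hwu] at hX
  calc X ≤ (1 + 6 * w) * (a * b + R) := hX.trans (by gcongr)
    _ ≤ a * b * (1 + 6 * w) + 7 * R := by nlinarith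
    _ ≤ quasiIndepBound 6 (21 * C + 63) (28 * C ^ 2 + 42 * C + 1) s a b q t := by
      unfold quasiIndepBound
      rw [hu2]
      nlinarith [mul_nonneg (mul_nonneg hC ha) hu, mul_nonneg ha hu,
        mul_nonneg (mul_nonneg hC hb0) ht, mul_nonneg hb0 hu, mul_nonneg hC (sq_nonneg u),
        sq_nonneg u]

lemma le_quasiIndepBound_of_unit_scale {C s a b q t X : ℝ} (hC : 0 ≤ C) (hs : 0 ≤ s) (ha : 0 ≤ a)
    (hb : 0 ≤ b) (ht : 0 ≤ t) (hq : 0 < q) (hq1 : q ≤ 1) (hbC : b < C * q ^ (s / 2))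
    (hX : X ≤ (1 + 3 * q * (1 / q + 1)) *
      ((b + 2 * C * q ^ s) * (a + 2 * C * q ^ s + 3 * min 1 t))) :
    X ≤ quasiIndepBound 6 (21 * C + 63) (28 * C ^ 2 + 42 * C + 1) s a b q t := by
  have hv : q ^ s = (q ^ (s / 2)) ^ 2 := by
    rw [← Real.rpow_natCast, ← Real.rpow_mul hq.le]; norm_num
  set u := q ^ (s / 2)
  set v := q ^ s
  have hu : 0 ≤ u := by positivity
  have hu1 : u ≤ 1 := Real.rpow_le_one hq.le hq1 (by linarith)
  have hvu : v ≤ u := by rw [hv]; nlinarith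
  have hv0 : 0 ≤ v := by positivity
  have hτ0 : 0 ≤ min 1 t := le_min zero_le_one ht
  have hτt : min 1 t ≤ t := min_le_right 1 t
  have hτ1 : min 1 t ≤ 1 := min_le_left 1 t
  have hfactor : 1 + 3 * q * (1 / q + 1) ≤ 7 := by
    rw [mul_add, mul_one, mul_assoc, one_div, mul_inv_cancel₀ hq.ne']
    linarith
  set R := 3 * C * a * u + 2 * C * b * u + 4 * C ^ 2 * v + 3 * b * t + 6 * C * v
  have hW : (b + 2 * C * v) * (a + 2 * C * v + 3 * min 1 t) ≤ R := by
    have hab : a * b ≤ C * a * u := by nlinarith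
    nlinarith [mul_le_mul_of_nonneg_left hvu (mul_nonneg hC ha),
      mul_le_mul_of_nonneg_left hvu (mul_nonneg hC hb), mul_le_mul_of_nonneg_left hτt hb,
      mul_le_mul_of_nonneg_left hτ1 (mul_nonneg hC hv0), mul_nonneg (mul_nonneg hC hv0) hτ0,
      mul_le_mul_of_nonneg_left (show v ^ 2 ≤ v by nlinarith) (sq_nonneg C)]
  have hR : 0 ≤ R := by positivity
  calc X ≤ 7 * R := hX.trans (by gcongr)
    _ ≤ quasiIndepBound 6 (21 * C + 63) (28 * C ^ 2 + 42 * C + 1) s a b q t := by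
      unfold quasiIndepBound
      nlinarith [mul_nonneg (mul_nonneg ha hb) (Real.sqrt_nonneg q), mul_nonneg ha hu,
        mul_nonneg hb hu, mul_nonneg hb ht, mul_nonneg (mul_nonneg hC hb) ht, hv0,
        mul_nonneg hC hv0]

lemma le_quasiIndepBound_of_one_lt {K₁ K₂ K₃ s a b q t X : ℝ} (hK₁ : 0 ≤ K₁) (hK₂ : 0 ≤ K₂)
    (hK₃ : 1 ≤ K₃) (hs : 0 ≤ s) (ha : 0 ≤ a) (hb : 0 ≤ b) (ht : 0 ≤ t) (hq : 1 < q)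
    (hX : X ≤ 1) : X ≤ quasiIndepBound K₁ K₂ K₃ s a b q t := by
  have hqs : 1 ≤ q ^ s := Real.one_le_rpow hq.le hs
  have hrest : 0 ≤ a * b * (1 + K₁ * √q) + K₂ * (a * q ^ (s / 2) + b * (q ^ (s / 2) + t)) := by
    positivity
  unfold quasiIndepBound
  nlinarith

theorem stmt15_general (μ : Measure ℝ) [IsProbabilityMeasure μ] (hX : μ (Set.Icc (0:ℝ) 1) = 1)
    (T : ℝ → ℝ) (hT : MeasurePreserving T μ μ) (p : ℕ → ℝ) (hp : ∀ n, 0 < p n)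
    (hdecay : ∀ n : ℕ, ∀ g h : ℝ → ℝ, Integrable g μ →
      eVariationOn h (Set.Icc (0:ℝ) 1) ≠ ⊤ →
      |∫ x, g (T^[n] x) * h x ∂μ - (∫ x, g x ∂μ) * ∫ x, h x ∂μ|
        ≤ (∫ x, |g x| ∂μ) * BVNorm h * p n)
    (s c : ℝ) (hs : 0 < s) (hc : 0 < c)
    (hreg : ∀ x ∈ Set.Icc (0:ℝ) 1, ∀ ρ : ℝ, 0 < ρ →
      (μ (Metric.ball x ρ ∩ Set.Icc (0:ℝ) 1)).toReal ≤ c * ρ ^ s)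
    (M : ℕ → ℝ) (hM : ∀ n, M n ∈ Set.Ioo (0:ℝ) 1) (r : ℕ → ℝ → ℝ)
    (hrLip : ∀ n, LipschitzWith 1 (r n))
    (hratt : ∀ n, ∀ x ∈ Set.Icc (0:ℝ) 1,
      (μ (Metric.ball x (r n x) ∩ Set.Icc (0:ℝ) 1)).toReal = M n)
    (f : ℝ → ℝ) (L : NNReal) (hfLip : LipschitzOnWith L f (Set.Icc (0:ℝ) 1))
    (hfmaps : MapsTo f (Set.Icc (0:ℝ) 1) (Set.Icc (0:ℝ) 1)) :
    ∃ K₁ K₂ K₃ : ℝ, 0 < K₁ ∧ 0 < K₂ ∧ 0 < K₃ ∧ ∀ n m : ℕ,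
      (μ ({x ∈ Set.Icc (0:ℝ) 1 | |T^[n] x - f x| < r n (f x)} ∩
          {x ∈ Set.Icc (0:ℝ) 1 | |T^[n + m] x - f x| < r (n + m) (f x)})).toReal
        ≤ M n * M (n + m) * (1 + K₁ * Real.sqrt (p n))
          + K₂ * (M n * p n ^ (s / 2) + M (n + m) * (p n ^ (s / 2) + p m))
          + K₃ * p n ^ s := by
  set C := c * (2 * (L : ℝ) + 1) ^ s
  have hC : 0 ≤ C := by positivity
  refine ⟨6, 21 * C + 63, 28 * C ^ 2 + 42 * C + 1, by norm_num, by positivity, by positivity,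
    fun n m => ?_⟩
  have hbound {Δ : ℝ} (hΔ : 0 < Δ) := measureReal_recurrenceSet_inter_le_of_regular hX hT hdecay
    (hp n).le (hp m).le hreg (hrLip n) (hrLip (n + m)) (hratt n) (hratt (n + m)) hfLip hfmaps hΔ
  have ha := (hM n).1.le
  have hb := (hM (n + m)).1.le
  rcases le_or_gt (p n) 1 with hq1 | hq1
  · rcases le_or_gt (C * p n ^ (s / 2)) (M (n + m)) with hlarge | hsmall
    · exact le_quasiIndepBound_of_sqrt_scale hC ha (hp m).le (hp n) hq1 hlarge
        (hbound (Real.sqrt_pos.2 (hp n)))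
    · exact le_quasiIndepBound_of_unit_scale hC hs.le ha hb (hp m).le (hp n) hq1 hsmall
        (hbound (hp n))
  · exact le_quasiIndepBound_of_one_lt (by norm_num) (by positivity) (by nlinarith) hs.le ha hb
      (hp m).le hq1 measureReal_le_one

/-- quasi-independence estimate for the sets
`R_j = {x : |T^j x − f(x)| < r_j(f(x))}` under decay of correlations and upper
Ahlfors regularity. -/
theorem stmt15 (μ : Measure ℝ) [IsProbabilityMeasure μ] (hX : μ (Set.Icc (0:ℝ) 1) = 1)
    (T : ℝ → ℝ) (hT : MeasurePreserving T μ μ) (p : ℕ → ℝ) (hp : ∀ n, 0 < p n)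
    (hdecay : ∀ n : ℕ, ∀ g h : ℝ → ℝ, Integrable g μ →
      eVariationOn h (Set.Icc (0:ℝ) 1) ≠ ⊤ →
      |∫ x, g (T^[n] x) * h x ∂μ - (∫ x, g x ∂μ) * ∫ x, h x ∂μ|
        ≤ (∫ x, |g x| ∂μ) * BVNorm h * p n)
    (s c : ℝ) (hs : 0 < s) (hc : 0 < c)
    (hreg : ∀ x ∈ Set.Icc (0:ℝ) 1, ∀ ρ : ℝ, 0 < ρ →
      (μ (Metric.ball x ρ ∩ Set.Icc (0:ℝ) 1)).toReal ≤ c * ρ ^ s)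
    (M : ℕ → ℝ) (hM : ∀ n, M n ∈ Set.Ioo (0:ℝ) 1) (r : ℕ → ℝ → ℝ)
    (hrLip : ∀ n, LipschitzWith 1 (r n))
    (hratt : ∀ n, ∀ x ∈ Set.Icc (0:ℝ) 1,
      (μ (Metric.ball x (r n x) ∩ Set.Icc (0:ℝ) 1)).toReal = M n)
    (f : ℝ → ℝ) (L : NNReal) (hfLip : LipschitzOnWith L f (Set.Icc (0:ℝ) 1))
    (hfMono : MonotoneOn f (Set.Icc (0:ℝ) 1))
    (hfmaps : MapsTo f (Set.Icc (0:ℝ) 1) (Set.Icc (0:ℝ) 1)) :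
    ∃ K₁ K₂ K₃ : ℝ, 0 < K₁ ∧ 0 < K₂ ∧ 0 < K₃ ∧ ∀ n m : ℕ,
      (μ ({x ∈ Set.Icc (0:ℝ) 1 | |T^[n] x - f x| < r n (f x)} ∩
          {x ∈ Set.Icc (0:ℝ) 1 | |T^[n + m] x - f x| < r (n + m) (f x)})).toReal
        ≤ M n * M (n + m) * (1 + K₁ * Real.sqrt (p n))
          + K₂ * (M n * p n ^ (s / 2) + M (n + m) * (p n ^ (s / 2) + p m))
          + K₃ * p n ^ s :=
  stmt15_general μ hX T hT p hp hdecay s c hs hc hreg M hM r hrLip hratt f L hfLip hfmaps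
end
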